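/- Let σ be a map assigning to each pair x < y in P an element σ(x,y) ∈ R which is constant on chains. Then the map B : D × D → I(P,R) defined by B(f,g)(x,x) = 0 for all x ∈ P and B(f,g)(x,y) = σ(x,y)·[f,g](x,y) for all x < y is an R-bilinear antisymmetric biderivation of D with values in I(P,R). -/

import Mathlib

/-- The element `e_{xy}` of the incidence algebra: value `1` at `(x, y)` and `0` elsewhere. -/
def esingle (R : Type*) {P : Type*} [CommRing R] [PartialOrder P] [DecidableEq P]
    {x y : P} (_h : x ≤ y) : IncidenceAlgebra R P :=
  ⟨fun u v => if u = x ∧ v = y then 1 else 0, fun u v huv => by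
    try dsimp only
    split_ifs with h'
    · obtain ⟨rfl, rfl⟩ := h'
      exact absurd _h huv
    · rfl⟩

/-- `D`: the `R`-span of the elements `e_{xy}`, `x ≤ y`, i.e. the finitely supported elements of
the incidence algebra. -/
def Dspan (R P : Type*) [CommRing R] [PartialOrder P] [DecidableEq P] :
    Submodule R (IncidenceAlgebra R P) :=
  Submodule.span R {f : IncidenceAlgebra R P | ∃ (x y : P) (h : x ≤ y), f = esingle R h}

/-!
On `D`, `B f g` is the commutator `f * g - g * f` weighted pointwise by `σ` (both vanish on the
diagonal, since `R` is commutative). Weighting is `R`-linear, and because `σ` is constant on chains,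
`σ x z = σ x y` whenever `x < z ≤ y`; hence for `k` with zero diagonal the weighting commutes with
multiplication by any `g`: `σ·(k * g) = (σ·k) * g` and `σ·(g * k) = g * (σ·k)`. Commutators have
zero diagonal, so the Leibniz rules for `B` follow from those of the commutator.
-/

open Finset IncidenceAlgebra

section Dspan

variable {R P : Type*} [CommRing R] [PartialOrder P] [DecidableEq P]

lemma esingle_apply {x y : P} (h : x ≤ y) (a b : P) :
    esingle R h a b = if a = x ∧ b = y then 1 else 0 := rfl

variable [LocallyFiniteOrder P]

lemma esingle_mul_esingle {x y z : P} (hxy : x ≤ y) (hyz : y ≤ z) :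
    esingle R hxy * esingle R hyz = esingle R (hxy.trans hyz) := by
  ext a b
  by_cases hax : a = x <;> by_cases hbz : b = z <;>
    simp [esingle_apply, hax, hbz, hxy, hyz]

lemma esingle_mul_esingle_of_ne {x y u v : P} (hxy : x ≤ y) (huv : u ≤ v) (hyu : y ≠ u) :
    esingle R hxy * esingle R huv = 0 := by
  ext a b
  refine sum_eq_zero fun z _ => ?_
  by_cases hzy : z = y <;> simp_all [esingle_apply]

lemma mul_mem_Dspan {f g : IncidenceAlgebra R P} (hf : f ∈ Dspan R P) (hg : g ∈ Dspan R P) :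
    f * g ∈ Dspan R P := by
  suffices Dspan R P * Dspan R P ≤ Dspan R P from this (Submodule.mul_mem_mul hf hg)
  rw [Dspan, Submodule.span_mul_span, Submodule.span_le]
  rintro _ ⟨_, ⟨x, y, hxy, rfl⟩, _, ⟨u, v, huv, rfl⟩, rfl⟩
  dsimp only
  by_cases hyu : y = u
  · subst hyu
    rw [esingle_mul_esingle]
    exact Submodule.subset_span ⟨x, v, hxy.trans huv, rfl⟩
  · rw [esingle_mul_esingle_of_ne hxy huv hyu]
    exact zero_mem _

end Dspan

lemma isChain_of_le_of_le {P : Type*} [Preorder P] {x z y : P} (hxz : x ≤ z) (hzy : z ≤ y) :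
    IsChain (· ≤ ·) ({x, z, y} : Set P) := by
  refine (Set.subsingleton_singleton.isChain.insert ?_).insert ?_ <;> simp_all [hxz.trans hzy]

def IsConstOnChains {R P : Type*} [Preorder P] (σ : P → P → R) : Prop :=
  ∀ x y u v : P, x < y → u < v → IsChain (· ≤ ·) ({x, y, u, v} : Set P) → σ x y = σ u v

namespace IsConstOnChains

variable {R P : Type*} [Preorder P] {σ : P → P → R}

lemma eq_of_lt_of_le (hσ : IsConstOnChains σ) {x z y : P} (hxz : x < z) (hzy : z ≤ y) :
    σ x z = σ x y :=
  hσ x z x y hxz (hxz.trans_le hzy) <| (isChain_of_le_of_le hxz.le hzy).mono <| by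
    intro a; simp only [Set.mem_insert_iff, Set.mem_singleton_iff]; tauto

lemma eq_of_le_of_lt (hσ : IsConstOnChains σ) {x z y : P} (hxz : x ≤ z) (hzy : z < y) :
    σ z y = σ x y :=
  hσ z y x y hzy (hxz.trans_lt hzy) <| (isChain_of_le_of_le hxz hzy.le).mono <| by
    intro a; simp only [Set.mem_insert_iff, Set.mem_singleton_iff]; tauto

end IsConstOnChains

namespace IncidenceAlgebra

section Weight

variable {R P : Type*} [CommSemiring R]

def weightBy [Preorder P] (σ : P → P → R) : IncidenceAlgebra R P →ₗ[R] IncidenceAlgebra R P where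
  toFun k := ⟨fun x y => σ x y * k x y, fun x y h => by rw [apply_eq_zero_of_not_le h, mul_zero]⟩
  map_add' k l := by ext; simp [mul_add]
  map_smul' r k := by ext; simp [mul_left_comm]

@[simp]
lemma weightBy_apply [Preorder P] (σ : P → P → R) (k : IncidenceAlgebra R P) (x y : P) :
    weightBy σ k x y = σ x y * k x y := rfl

variable [PartialOrder P] [LocallyFiniteOrder P] {σ : P → P → R}

lemma weightBy_mul_of_left_apply_self_eq_zero (hσ : IsConstOnChains σ) {k : IncidenceAlgebra R P}
    (hk : ∀ x, k x x = 0) (g : IncidenceAlgebra R P) :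
    weightBy σ (k * g) = weightBy σ k * g := by
  ext x y
  rw [weightBy_apply, mul_apply, mul_apply, mul_sum]
  refine sum_congr rfl fun z hz => ?_
  obtain ⟨hxz, hzy⟩ := mem_Icc.1 hz
  rcases hxz.eq_or_lt with rfl | hxz
  · simp [hk]
  · rw [weightBy_apply, hσ.eq_of_lt_of_le hxz hzy, mul_assoc]

lemma weightBy_mul_of_right_apply_self_eq_zero (hσ : IsConstOnChains σ) {k : IncidenceAlgebra R P}
    (hk : ∀ x, k x x = 0) (g : IncidenceAlgebra R P) :
    weightBy σ (g * k) = g * weightBy σ k := by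
  ext x y
  rw [weightBy_apply, mul_apply, mul_apply, mul_sum]
  refine sum_congr rfl fun z hz => ?_
  obtain ⟨hxz, hzy⟩ := mem_Icc.1 hz
  rcases hzy.eq_or_lt with rfl | hzy
  · simp [hk]
  · rw [weightBy_apply, hσ.eq_of_le_of_lt hxz hzy, mul_left_comm]

end Weight

lemma commutator_apply_self {R P : Type*} [CommRing R] [PartialOrder P] [LocallyFiniteOrder P]
    (f g : IncidenceAlgebra R P) (x : P) : (f * g - g * f) x x = 0 := by
  simp [sub_apply, mul_comm]

end IncidenceAlgebra

section Commutator

variable {A : Type*} [Ring A]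

lemma commutator_mul_left (a b c : A) :
    a * b * c - c * (a * b) = (a * c - c * a) * b + a * (b * c - c * b) := by
  noncomm_ring

lemma commutator_mul_right (a b c : A) :
    a * (b * c) - b * c * a = (a * b - b * a) * c + b * (a * c - c * a) := by
  noncomm_ring

end Commutator

/-- If `σ : P²_< → R` is constant on chains, then the map `B` defined by
`B(f,g)(x,x) = 0` and `B(f,g)(x,y) = σ(x,y)[f,g](x,y)` for `x < y` is an `R`-bilinear
antisymmetric biderivation of `D` with values in `I(P,R)`. -/
theorem sigma_commutator_is_bider_of_D
    {R P : Type*} [CommRing R] [PartialOrder P] [LocallyFiniteOrder P] [DecidableEq P]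
    (σ : P → P → R)
    (hσ : ∀ x y u v : P, x < y → u < v → IsChain (· ≤ ·) ({x, y, u, v} : Set P) →
      σ x y = σ u v)
    (B : IncidenceAlgebra R P → IncidenceAlgebra R P → IncidenceAlgebra R P)
    (hB_diag : ∀ f g, f ∈ Dspan R P → g ∈ Dspan R P → ∀ x : P, B f g x x = 0)
    (hB_lt : ∀ f g, f ∈ Dspan R P → g ∈ Dspan R P →
      ∀ x y : P, x < y → B f g x y = σ x y * (f * g - g * f) x y) :
    (∀ f g h, f ∈ Dspan R P → g ∈ Dspan R P → h ∈ Dspan R P →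
      B (f + g) h = B f h + B g h) ∧
    (∀ f g h, f ∈ Dspan R P → g ∈ Dspan R P → h ∈ Dspan R P →
      B f (g + h) = B f g + B f h) ∧
    (∀ (r : R) (f h), f ∈ Dspan R P → h ∈ Dspan R P → B (r • f) h = r • B f h) ∧
    (∀ (r : R) (f h), f ∈ Dspan R P → h ∈ Dspan R P → B f (r • h) = r • B f h) ∧
    (∀ f g h, f ∈ Dspan R P → g ∈ Dspan R P → h ∈ Dspan R P →
      B (f * g) h = B f h * g + f * B g h) ∧
    (∀ f g h, f ∈ Dspan R P → g ∈ Dspan R P → h ∈ Dspan R P →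
      B f (g * h) = B f g * h + g * B f h) ∧
    (∀ f, f ∈ Dspan R P → B f f = 0) := by
  have hB : ∀ f g, f ∈ Dspan R P → g ∈ Dspan R P → B f g = weightBy σ (f * g - g * f) :=
    fun f g hf hg => IncidenceAlgebra.ext fun x y hxy => by
      rcases hxy.eq_or_lt with rfl | hxy
      · rw [hB_diag f g hf hg, weightBy_apply, commutator_apply_self, mul_zero]
      · rw [hB_lt f g hf hg x y hxy, weightBy_apply]
  have hσ' : IsConstOnChains σ := hσ
  refine ⟨fun f g h hf hg hh => ?_, fun f g h hf hg hh => ?_, fun r f h hf hh => ?_,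
    fun r f h hf hh => ?_, fun f g h hf hg hh => ?_, fun f g h hf hg hh => ?_, fun f hf => ?_⟩
  · rw [hB _ _ (add_mem hf hg) hh, hB f h hf hh, hB g h hg hh, ← map_add]
    congr 1; noncomm_ring
  · rw [hB _ _ hf (add_mem hg hh), hB f g hf hg, hB f h hf hh, ← map_add]
    congr 1; noncomm_ring
  · rw [hB _ _ (Submodule.smul_mem _ r hf) hh, hB f h hf hh, ← map_smul, smul_sub,
      smul_mul_assoc, mul_smul_comm]
  · rw [hB _ _ hf (Submodule.smul_mem _ r hh), hB f h hf hh, ← map_smul, smul_sub,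
      smul_mul_assoc, mul_smul_comm]
  · rw [hB _ _ (mul_mem_Dspan hf hg) hh, hB f h hf hh, hB g h hg hh, commutator_mul_left,
      map_add, weightBy_mul_of_left_apply_self_eq_zero hσ' (commutator_apply_self f h),
      weightBy_mul_of_right_apply_self_eq_zero hσ' (commutator_apply_self g h)]
  · rw [hB _ _ hf (mul_mem_Dspan hg hh), hB f g hf hg, hB f h hf hh, commutator_mul_right,
      map_add, weightBy_mul_of_left_apply_self_eq_zero hσ' (commutator_apply_self f g),
      weightBy_mul_of_right_apply_self_eq_zero hσ' (commutator_apply_self f h)]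
  · rw [hB f f hf hf, sub_self, map_zero]
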